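/- arXiv:1905.01457 — 2 statements merged into one kernel-verified Lean document; each statement's English description precedes it below -/
import Mathlib

section
/- Let b, λ ≥ 0, η > 0 and Δt > 0 satisfy Δt ≤ 1/η and Δt ≤ 1/√(bλ) (the latter interpreted vacuously if bλ = 0). Suppose the underdamped condition (Δt·bλ + η)² < 4bλ holds. Then the complex numbers μ_± = 1 − (Δt/2)[(Δt·bλ + η) ± i√(4bλ − (Δt·bλ + η)²)] satisfy |μ_±| = √(1 − ηΔt) < 1. -/
open Complex in
/-- In the underdamped case, the eigenvalues of the symplectic Euler iteration
matrix have modulus √(1 - ηΔt) < 1. -/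
theorem underdamped_eigenvalue_modulus
    (b lam η dt : ℝ) (hb : 0 ≤ b) (hlam : 0 ≤ lam) (hη : 0 < η) (hdt : 0 < dt)
    (hdt1 : dt ≤ 1 / η)
    (hdt2 : b * lam ≠ 0 → dt ≤ 1 / Real.sqrt (b * lam))
    (hunder : (dt * (b * lam) + η) ^ 2 < 4 * (b * lam)) :
    ‖        ((1 : ℂ) - (dt / 2 : ℝ) *
          (((dt * (b * lam) + η : ℝ) : ℂ)
            + Real.sqrt (4 * (b * lam) - (dt * (b * lam) + η) ^ 2) * Complex.I))‖
        = Real.sqrt (1 - η * dt) ∧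
    ‖        ((1 : ℂ) - (dt / 2 : ℝ) *
          (((dt * (b * lam) + η : ℝ) : ℂ)
            - Real.sqrt (4 * (b * lam) - (dt * (b * lam) + η) ^ 2) * Complex.I))‖
        = Real.sqrt (1 - η * dt) ∧
    Real.sqrt (1 - η * dt) < 1 := by
  have hs2 : Real.sqrt (4 * (b * lam) - (dt * (b * lam) + η) ^ 2) ^ 2
      = 4 * (b * lam) - (dt * (b * lam) + η) ^ 2 := Real.sq_sqrt (by linarith)
  have hηdt : dt * η ≤ 1 := (le_div_iff₀ hη).mp hdt1
  have h0 : 0 ≤ 1 - η * dt := by nlinarith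
  have key : ∀ t : ℝ, t ^ 2 = 4 * (b * lam) - (dt * (b * lam) + η) ^ 2 →
      ‖(1 : ℂ) - (dt / 2 : ℝ) *
        (((dt * (b * lam) + η : ℝ) : ℂ) + (t : ℝ) * Complex.I)‖
        = Real.sqrt (1 - η * dt) := by
    intro t ht
    rw [Complex.norm_def]
    congr 1
    simp [Complex.normSq_apply]
    nlinarith [ht]
  refine ⟨key _ hs2, ?_, ?_⟩
  · have := key (-(Real.sqrt (4 * (b * lam) - (dt * (b * lam) + η) ^ 2)))
      (by rw [neg_pow]; simpa using hs2)
    simpa [sub_eq_add_neg, neg_mul] using this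
  · have : 0 < η * dt := mul_pos hη hdt
    calc Real.sqrt (1 - η * dt) < Real.sqrt 1 := Real.sqrt_lt_sqrt h0 (by linarith)
    _ = 1 := Real.sqrt_one
end

section
/- Let b, λ > 0, η > 0 and Δt > 0 satisfy ηΔt ≤ 1 and bλΔt² ≤ 1, and suppose the overdamped condition (Δt·bλ + η)² > 4bλ holds. Set a = (η + Δt·bλ)/(2√(bλ)) (so a > 1) and μ_± = 1 − Δt√(bλ)(a ± √(a² − 1)). Then −1 < μ_± < 1. -/
/-- In the overdamped case, the (real) eigenvalues
μ_± = 1 - Δt√(bλ)(a ± √(a²-1)), with a = (η + Δt·bλ)/(2√(bλ)), lie in (-1, 1). -/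
theorem overdamped_eigenvalue_bound
    (b lam η dt : ℝ) (hb : 0 < b) (hlam : 0 < lam) (hη : 0 < η) (hdt : 0 < dt)
    (hdt1 : η * dt ≤ 1) (hdt2 : b * lam * dt ^ 2 ≤ 1)
    (hover : (dt * (b * lam) + η) ^ 2 > 4 * (b * lam)) :
    (-1 < 1 - dt * Real.sqrt (b * lam) *
        ((η + dt * (b * lam)) / (2 * Real.sqrt (b * lam))
          + Real.sqrt (((η + dt * (b * lam)) / (2 * Real.sqrt (b * lam))) ^ 2 - 1)) ∧
      1 - dt * Real.sqrt (b * lam) *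
        ((η + dt * (b * lam)) / (2 * Real.sqrt (b * lam))
          + Real.sqrt (((η + dt * (b * lam)) / (2 * Real.sqrt (b * lam))) ^ 2 - 1)) < 1) ∧
    (-1 < 1 - dt * Real.sqrt (b * lam) *
        ((η + dt * (b * lam)) / (2 * Real.sqrt (b * lam))
          - Real.sqrt (((η + dt * (b * lam)) / (2 * Real.sqrt (b * lam))) ^ 2 - 1)) ∧
      1 - dt * Real.sqrt (b * lam) *
        ((η + dt * (b * lam)) / (2 * Real.sqrt (b * lam))
          - Real.sqrt (((η + dt * (b * lam)) / (2 * Real.sqrt (b * lam))) ^ 2 - 1)) < 1) := by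
  have hbl : 0 < b * lam := mul_pos hb hlam
  set s := Real.sqrt (b * lam) with hs_def
  have hs : 0 < s := Real.sqrt_pos.mpr hbl
  have hs2 : s ^ 2 = b * lam := Real.sq_sqrt hbl.le
  set a := (η + dt * (b * lam)) / (2 * s) with ha_def
  -- a > 1
  have hnum : 0 < η + dt * (b * lam) := by positivity
  have hgt : 2 * s < η + dt * (b * lam) := by
    have h4 : 4 * (b * lam) = (2 * s) ^ 2 := by rw [mul_pow]; rw [hs2]; ring
    have := hover
    rw [h4] at this
    nlinarith [mul_pos hs hs]
  have ha1 : 1 < a := by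
    rw [ha_def, lt_div_iff₀ (by positivity)]
    linarith
  have ha0 : 0 < a := lt_trans one_pos ha1
  set r := Real.sqrt (a ^ 2 - 1) with hr_def
  have hr0 : 0 ≤ r := Real.sqrt_nonneg _
  have hra : r < a := by
    have : r ^ 2 = a ^ 2 - 1 := Real.sq_sqrt (by nlinarith)
    nlinarith
  -- 2 * s * a = η + dt * (b*lam)
  have hsa : 2 * (s * a) = η + dt * (b * lam) := by
    rw [ha_def]; field_simp
  -- key bound: dt * s * (a + r) < 2
  have hkey : dt * s * (a + r) < 2 := by
    have h1 : dt * s * (a + r) < dt * s * (2 * a) := by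
      apply mul_lt_mul_of_pos_left (by linarith) (by positivity)
    have h2 : dt * s * (2 * a) = dt * (η + dt * (b * lam)) := by
      rw [← hsa]; ring
    have h3 : dt * (η + dt * (b * lam)) ≤ 2 := by nlinarith
    linarith
  have hpos1 : 0 < dt * s * (a + r) := by positivity
  have hpos2 : 0 < dt * s * (a - r) := by
    apply mul_pos (by positivity); linarith
  have hkey2 : dt * s * (a - r) < 2 := by
    have : dt * s * (a - r) ≤ dt * s * (a + r) := by
      apply mul_le_mul_of_nonneg_left (by linarith) (by positivity)
    linarith
  constructor <;> constructor <;> linarith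
end
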